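/- arXiv:1203.6830 — 3 statements merged into one kernel-verified Lean document; each statement's English description precedes it below -/
import Mathlib

section
/- Let X be a simplicial complex which is weakly Cohen–Macaulay of dimension n (wCM(X) ≥ n), and let σ be a p-simplex of X. Then the link Lk(σ) is weakly Cohen–Macaulay of dimension n − p − 1, i.e. wCM(Lk(σ)) ≥ n − p − 1. -/
noncomputable section

/-- For `m : ℤ`, a topological space `Z` is `m`-connected if it is nonempty when `m ≥ -1`,
path-connected when `m ≥ 0`, and has trivial homotopy groups `π_i` for `1 ≤ i ≤ m`.
Every space is `m`-connected for `m ≤ -2`. -/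
def IsMConnected (m : ℤ) (Z : Type*) [TopologicalSpace Z] : Prop :=
  (-1 ≤ m → Nonempty Z) ∧ (0 ≤ m → PathConnectedSpace Z) ∧
    ∀ i : ℕ, 1 ≤ i → (i : ℤ) ≤ m → ∀ z : Z, Subsingleton (HomotopyGroup (Fin i) Z z)

/-- An (abstract) simplicial complex on a vertex type `V`: a collection of finite
non-empty sets of vertices (the simplices), closed under passing to non-empty subsets.
A `p`-simplex is a face with `p + 1` vertices. -/
structure SComplex (V : Type*) where
  faces : Set (Finset V)
  nonempty_of_mem : ∀ ⦃s : Finset V⦄, s ∈ faces → s.Nonempty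
  down_closed : ∀ ⦃s : Finset V⦄, s ∈ faces → ∀ ⦃t : Finset V⦄, t ⊆ s → t.Nonempty → t ∈ faces

/-- The link of a simplex `σ`: all simplices `τ` disjoint from `σ` such that
`τ ∪ σ` is a simplex. -/
def SComplex.link {V : Type*} (K : SComplex V) (σ : Finset V) : SComplex V where
  faces := {τ | τ ∈ K.faces ∧ Disjoint τ σ ∧ ∃ ρ ∈ K.faces, (ρ : Set V) = ↑τ ∪ ↑σ}
  nonempty_of_mem := fun _ hs => K.nonempty_of_mem hs.1
  down_closed := by
    classical
    rintro s ⟨hs, hdisj, ρ, hρ, hρeq⟩ t hts ht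
    refine ⟨K.down_closed hs hts ht, hdisj.mono_left hts, t ∪ σ, ?_, Finset.coe_union _ _⟩
    apply K.down_closed hρ ?_ (ht.mono Finset.subset_union_left)
    rw [← Finset.coe_subset, Finset.coe_union, hρeq]
    exact Set.union_subset_union_left _ (by exact_mod_cast hts)

/-- The geometric realization of a simplicial complex: the set of convex weightings
of the vertices whose support is contained in a simplex, topologised as a subspace
of `V → ℝ`. -/
def SComplex.realization {V : Type*} (K : SComplex V) : Set (V → ℝ) :=
  {f | (∀ v, 0 ≤ f v) ∧ ∃ s ∈ K.faces, Function.support f ⊆ ↑s ∧ ∑ v ∈ s, f v = 1}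

/-- `K` is weakly Cohen–Macaulay of dimension `n`, `wCM(K) ≥ n`: its realization is
`(n-1)`-connected and the link of every `p`-simplex is `(n-p-2)`-connected. -/
def SComplex.WCM {V : Type*} (K : SComplex V) (n : ℤ) : Prop :=
  IsMConnected (n - 1) K.realization ∧
    ∀ (p : ℕ) (σ : Finset V), σ ∈ K.faces → σ.card = p + 1 →
      IsMConnected (n - p - 2) (K.link σ).realization

lemma SComplex.ext' {V : Type*} {K L : SComplex V} (h : K.faces = L.faces) : K = L := by
  cases K; cases L; cases h; rfl

lemma link_link_eq {V : Type*} [DecidableEq V] (K : SComplex V) (σ τ : Finset V)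
    (hτ : τ ∈ (K.link σ).faces) : (K.link σ).link τ = K.link (τ ∪ σ) := by
  classical
  obtain ⟨hτK, hτσ, _⟩ := hτ
  apply SComplex.ext'
  ext ρ
  constructor
  · rintro ⟨⟨hρK, hρσ, -⟩, hρτ, π, ⟨hπK, hπσ, π₂, hπ₂, hπ₂eq⟩, hπeq⟩
    refine ⟨hρK, by simp [Finset.disjoint_union_right, hρτ, hρσ], π₂, hπ₂, ?_⟩
    rw [hπ₂eq, hπeq, Finset.coe_union]
    simp [Set.union_assoc]
  · rintro ⟨hρK, hρd, π, hπK, hπeq⟩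
    rw [Finset.disjoint_union_right] at hρd
    have hsub : ∀ t : Finset V, (t : Set V) ⊆ ↑ρ ∪ (↑τ ∪ ↑σ) → t.Nonempty → t ∈ K.faces := by
      intro t ht htne
      apply K.down_closed hπK ?_ htne
      rw [← Finset.coe_subset, hπeq]
      push_cast
      exact ht
    have hρστ : (ρ ∪ σ : Finset V) ∈ K.faces := by
      refine hsub _ ?_ ((K.nonempty_of_mem hρK).mono Finset.subset_union_left)
      intro x hx
      simp only [Finset.coe_union, Set.mem_union] at hx ⊢
      tauto
    have hρτf : (ρ ∪ τ : Finset V) ∈ K.faces := by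
      refine hsub _ ?_ ((K.nonempty_of_mem hρK).mono Finset.subset_union_left)
      intro x hx
      simp only [Finset.coe_union, Set.mem_union] at hx ⊢
      tauto
    refine ⟨⟨hρK, hρd.2, ρ ∪ σ, hρστ, Finset.coe_union _ _⟩, hρd.1,
      ρ ∪ τ, ⟨hρτf, by simp [Finset.disjoint_union_left, hρd.2, hτσ], π, hπK, ?_⟩,
      Finset.coe_union _ _⟩
    rw [hπeq]
    simp [Set.union_assoc]

/-- If `wCM(X) ≥ n` and `σ` is a `p`-simplex of `X`, then `wCM(Lk(σ)) ≥ n - p - 1`. -/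
theorem wCM_link {V : Type*} (K : SComplex V) (n : ℤ) (hK : K.WCM n)
    (p : ℕ) (σ : Finset V) (hσ : σ ∈ K.faces) (hcard : σ.card = p + 1) :
    (K.link σ).WCM (n - p - 1) := by
  classical
  constructor
  · have := hK.2 p σ hσ hcard
    rw [show n - (p:ℤ) - 1 - 1 = n - p - 2 by ring]
    exact this
  · intro q τ hτ hqcard
    obtain ⟨hτK, hτσ, ρ, hρK, hρeq⟩ := hτ
    have hτσK : (τ ∪ σ : Finset V) ∈ K.faces := by
      have : (τ ∪ σ : Finset V) = ρ := Finset.coe_injective (by rw [hρeq, Finset.coe_union])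
      rwa [this]
    have hcard' : (τ ∪ σ).card = (p + q + 1) + 1 := by
      rw [Finset.card_union_of_disjoint hτσ, hqcard, hcard]; ring
    have := hK.2 (p + q + 1) (τ ∪ σ) hτσK hcard'
    rw [link_link_eq K σ τ ⟨hτK, hτσ, ρ, hρK, hρeq⟩,
      show n - (p:ℤ) - 1 - q - 2 = n - ((p + q + 1 : ℕ) : ℤ) - 2 by push_cast; ring]
    exact this
end
end

section
/- Let p: E → B be a Serre microfibration, (Y, X) a finite CW pair, F: Y → B a map, and f: X → E a map with p ∘ f = F|_X. Suppose there exists a map G: Y → E with p ∘ G = F such that G|_X is fibrewise homotopic to f, i.e. there is a homotopy φ: [0,1] × X → E from G|_X to f with p(φ(t,x)) = F(x) for all t ∈ [0,1] and x ∈ X. Then there exists a map H: Y → E with p ∘ H = F and H|_X = f. -/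
noncomputable section

/-- The closed unit disc `D^k ⊆ ℝ^k`. -/
abbrev Disk (k : ℕ) : Type := ↥(Metric.closedBall (0 : EuclideanSpace ℝ (Fin k)) 1)

/-- `p : E → B` is a Serre microfibration if for every `k` and every lifting problem
`f : {0} × D^k → E`, `h : [0,1] × D^k → B` with `p ∘ f = h(0, -)`, there is `ε > 0` and a
partial lift `H` defined for times `t ≤ ε` starting at `f`.  (We encode a map on
`[0,ε] × D^k` as a map on `[0,1] × D^k` whose lifting property is only required
for `t ≤ ε`.) -/
def IsSerreMicrofibration {E B : Type*} [TopologicalSpace E] [TopologicalSpace B]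
    (p : E → B) : Prop :=
  Continuous p ∧
    ∀ (k : ℕ) (f : C(Disk k, E)) (h : C(unitInterval × Disk k, B)),
      (∀ x, h (0, x) = p (f x)) →
      ∃ ε : ℝ, 0 < ε ∧ ∃ H : C(unitInterval × Disk k, E),
        (∀ x, H (0, x) = f x) ∧
          ∀ (t : unitInterval) (x : Disk k), (t : ℝ) ≤ ε → p (H (t, x)) = h (t, x)

/-- `B` is obtained from `A ⊆ B` by attaching a single `n`-cell: there is a
characteristic map `Φ : D^n → Y` with image in `B`, carrying `∂D^n = S^{n-1}` into `A`,
with `B = A ∪ Φ(D^n)`, mapping the open ball bijectively onto `B \ A`, and such that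
`B` carries the weak topology determined by `A` and `Φ`. -/
def IsCellAttachment {Y : Type*} [TopologicalSpace Y] (A B : Set Y) (n : ℕ) : Prop :=
  A ⊆ B ∧ ∃ Φ : EuclideanSpace ℝ (Fin n) → Y,
    ContinuousOn Φ (Metric.closedBall 0 1) ∧
    B = A ∪ Φ '' Metric.closedBall 0 1 ∧
    Φ '' Metric.sphere 0 1 ⊆ A ∧
    Set.InjOn Φ (Metric.ball 0 1) ∧
    Φ '' Metric.ball 0 1 = B \ A ∧
    ∀ C : Set Y, C ⊆ B →
      IsClosed {a : ↥A | (a : Y) ∈ C} →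
      IsClosed {x : ↥(Metric.closedBall (0 : EuclideanSpace ℝ (Fin n)) 1) | Φ ↑x ∈ C} →
      IsClosed {b : ↥B | (b : Y) ∈ C}

/-- `Y` is obtained from the subspace `X` by attaching finitely many cells. -/
def IsFiniteRelCW {Y : Type*} [TopologicalSpace Y] (X : Set Y) : Prop :=
  ∃ (m : ℕ) (F : ℕ → Set Y), F 0 = X ∧ F m = Set.univ ∧
    ∀ k < m, ∃ n, IsCellAttachment (F k) (F (k + 1)) n

/-- A finite CW complex: a Hausdorff space built from `∅` by finitely many
cell attachments. -/
def IsFiniteCW (Z : Type*) [TopologicalSpace Z] : Prop :=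
  T2Space Z ∧ IsFiniteRelCW (∅ : Set Z)

/-- `(Y, X)` is a finite CW pair: `Y` is Hausdorff, `X ⊆ Y` is closed, `X` is a finite
CW complex, and `Y` is obtained from `X` by attaching finitely many cells. -/
def IsFiniteCWPair {Y : Type*} [TopologicalSpace Y] (X : Set Y) : Prop :=
  T2Space Y ∧ IsClosed X ∧ IsFiniteCW ↥X ∧ IsFiniteRelCW X


/-!
The fibrewise homotopy `φ` is extended cell by cell to a fibrewise homotopy on all of `Y`
starting at `G`; its end is the required lift.

For a single cell with characteristic map `Φ : Dⁿ → Y`, let `c : Dⁿ → Dⁿ` collapse the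
annulus `1/3 ≤ ‖y‖ ≤ 1` radially onto the sphere. The map `F ∘ Φ ∘ c` has a lift which
is `G ∘ Φ ∘ c` on the inner ball and runs through the given homotopy radially on the
annulus.
The microfibration property lifts the radial homotopy from `c` to the identity only for
times `t ≤ ε`, but this suffices: the map `(t, y) ↦ (1 - t) c(y) + t y` has, over every
point `x` and for every `s`, a preimage `(T, k x)` with `T ≤ ε`, depending continuously on
`(s, x)`, equal to `(0, x / 3)` at `s = 0` and to `(0, (1 + s) x / 3)` on the sphere.
Composing the partial lift with this section gives the extension over the cell.
-/

open Set Metric unitInterval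

theorem ContinuousMap.exists_glue_of_isClosed {α β : Type*} [TopologicalSpace α]
    [TopologicalSpace β] {s t : Set α} (hs : IsClosed s) (ht : IsClosed t) (hst : s ∪ t = univ)
    (f : C(s, β)) (g : C(t, β))
    (hfg : ∀ x (hxs : x ∈ s) (hxt : x ∈ t), f ⟨x, hxs⟩ = g ⟨x, hxt⟩) :
    ∃ h : C(α, β), (∀ x : s, h x = f x) ∧ ∀ x : t, h x = g x := by
  classical
  have hmem : ∀ x, x ∉ s → x ∈ t := fun x hx =>
    (hst ▸ mem_univ x : x ∈ s ∪ t).resolve_left hx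
  let h : α → β := fun x => if hx : x ∈ s then f ⟨x, hx⟩ else g ⟨x, hmem x hx⟩
  have hs' : ∀ x : s, h x = f x := fun x => dif_pos x.2
  have ht' : ∀ x : t, h x = g x := by
    intro x
    by_cases hx : (x : α) ∈ s
    · exact (hs' ⟨x, hx⟩).trans (hfg x hx x.2)
    · exact dif_neg hx
  refine ⟨⟨h, ?_⟩, hs', ht'⟩
  rw [← continuousOn_univ, ← hst]
  refine ContinuousOn.union_of_isClosed ?_ ?_ hs ht <;>
    rw [continuousOn_iff_continuous_domRestrict]
  · exact (funext hs' : s.domRestrict h = f) ▸ f.continuous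
  · exact (funext ht' : t.domRestrict h = g) ▸ g.continuous

lemma norm_coe_disk_le_one {n : ℕ} (x : Disk n) : ‖x.1‖ ≤ 1 :=
  mem_closedBall_zero_iff.1 x.2

section CellAttachment

variable {Y Z : Type*} [TopologicalSpace Y] [TopologicalSpace Z] {A A' : Set Y} {n : ℕ}
  {Φ : EuclideanSpace ℝ (Fin n) → Y}

theorem continuous_of_cellAttachment (hAA' : A ⊆ A') (hΦ : ∀ x : Disk n, Φ x ∈ A')
    (hweak : ∀ C : Set Y, C ⊆ A' → IsClosed {a : A | (a : Y) ∈ C} →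
      IsClosed {x : Disk n | Φ x ∈ C} → IsClosed {b : A' | (b : Y) ∈ C})
    {u : A' → Z} (hA : Continuous fun a : A => u (inclusion hAA' a))
    (hD : Continuous fun x : Disk n => u ⟨Φ x, hΦ x⟩) : Continuous u := by
  refine continuous_iff_isClosed.2 fun K hK => ?_
  have hmem : ∀ b : A', (b : Y) ∈ Subtype.val '' (u ⁻¹' K) ↔ u b ∈ K := fun b =>
    Subtype.val_injective.mem_set_image
  have hA' : {a : A | (a : Y) ∈ Subtype.val '' (u ⁻¹' K)} =
      (fun a : A => u (inclusion hAA' a)) ⁻¹' K :=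
    ext fun a => hmem (inclusion hAA' a)
  have hD' : {x : Disk n | Φ x ∈ Subtype.val '' (u ⁻¹' K)} =
      (fun x : Disk n => u ⟨Φ x, hΦ x⟩) ⁻¹' K :=
    ext fun x => hmem ⟨Φ x, hΦ x⟩
  have hC := hweak _ (Subtype.coe_image_subset _ _) (hA' ▸ hK.preimage hA)
    (hD' ▸ hK.preimage hD)
  exact (ext hmem : {b : A' | (b : Y) ∈ Subtype.val '' (u ⁻¹' K)} = u ⁻¹' K) ▸ hC

theorem exists_continuousMap_extend_of_cellAttachment (hAA' : A ⊆ A')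
    (hΦ : ∀ x : Disk n, Φ x ∈ A') (hsph : Φ '' sphere 0 1 ⊆ A) (hinj : InjOn Φ (ball 0 1))
    (hball : Φ '' ball 0 1 = A' \ A)
    (hweak : ∀ C : Set Y, C ⊆ A' → IsClosed {a : A | (a : Y) ∈ C} →
      IsClosed {x : Disk n | Φ x ∈ C} → IsClosed {b : A' | (b : Y) ∈ C})
    (gA : C(A, Z)) (gD : C(Disk n, Z))
    (hcompat : ∀ (x : Disk n) (hx : Φ x ∈ A), gD x = gA ⟨Φ x, hx⟩) :
    ∃ g : C(A', Z), (∀ a : A, g (inclusion hAA' a) = gA a) ∧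
      ∀ x : Disk n, g ⟨Φ x, hΦ x⟩ = gD x := by
  classical
  have hcover : ∀ b : A', (b : Y) ∉ A → ∃ x ∈ ball 0 1, Φ x = b := fun b hb =>
    (hball.symm ▸ ⟨b.2, hb⟩ : (b : Y) ∈ Φ '' ball 0 1)
  let u : A' → Z := fun b => if hb : (b : Y) ∈ A then gA ⟨b, hb⟩ else
    gD ⟨(hcover b hb).choose, ball_subset_closedBall (hcover b hb).choose_spec.1⟩
  have huA : ∀ a : A, u (inclusion hAA' a) = gA a := fun a => dif_pos a.2
  have huD : ∀ x : Disk n, u ⟨Φ x, hΦ x⟩ = gD x := by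
    intro x
    by_cases hx : Φ x ∈ A
    · exact (huA ⟨_, hx⟩).trans (hcompat x hx).symm
    have hx' : x.1 ∈ ball 0 1 :=
      mem_ball_zero_iff.2 <| (norm_coe_disk_le_one x).lt_of_ne fun h =>
        hx (hsph ⟨x, mem_sphere_zero_iff_norm.2 h, rfl⟩)
    have hspec := (hcover ⟨Φ x, hΦ x⟩ hx).choose_spec
    simp only [u, dif_neg hx]
    exact congrArg gD (Subtype.ext (hinj hspec.1 hx' hspec.2))
  refine ⟨⟨u, continuous_of_cellAttachment hAA' hΦ hweak ?_ ?_⟩, huA, huD⟩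
  · simpa only [huA] using gA.continuous
  · simpa only [huD] using gD.continuous

end CellAttachment

/-- `radialFactor t ‖y‖ • y` is, at `t = 0`, the radial map sending the ball of radius `1/3`
onto the unit ball and the annulus `1/3 ≤ ‖y‖ ≤ 1` onto the unit sphere, and at `t = 1`
the identity. -/
def radialFactor (t r : ℝ) : ℝ := (1 - t) * (3 / max 1 (3 * r)) + t

/-- Equal to `1 / 3` at `s = 0` and wherever `3 * (1 - r) ≥ ε`, and to `(1 + s) / 3` at `r = 1`;
it rises so steeply near the sphere that `cellTime (cellScale ε s r) r ≤ ε`. -/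
def cellScale (ε s r : ℝ) : ℝ := (1 + s * max 0 (1 - 3 * (1 - r) / ε)) / 3

/-- The time at which the radial homotopy moves the radius `k * r` to `r`: the first term of
the `min` solves this while `3 * k * r ≤ 1`, the second one afterwards. -/
def cellTime (k r : ℝ) : ℝ := min ((3 * k - 1) / (2 * k)) ((1 - r) / (1 - k * r))

section Scalar

variable {ε s t k r : ℝ}

lemma continuous_radialFactor : Continuous fun a : ℝ × ℝ => radialFactor a.1 a.2 := by
  unfold radialFactor
  have : Continuous fun a : ℝ × ℝ => 3 / max 1 (3 * a.2) :=
    continuous_const.div (by fun_prop) fun a => (one_pos.trans_le (le_max_left _ _)).ne'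
  fun_prop

lemma three_div_max_mul : 3 / max 1 (3 * r) * r = min (3 * r) 1 := by
  rcases le_total (3 * r) 1 with h | h
  · rw [max_eq_left h, min_eq_left h]; ring
  · have : r ≠ 0 := (by linarith : (0 : ℝ) < r).ne'
    rw [max_eq_right h, min_eq_right h]; field_simp

lemma radialFactor_nonneg (ht0 : 0 ≤ t) (ht1 : t ≤ 1) : 0 ≤ radialFactor t r := by
  unfold radialFactor
  have : 0 ≤ 3 / max 1 (3 * r) :=
    div_nonneg (by norm_num) (zero_le_one.trans (le_max_left _ _))
  positivity

lemma radialFactor_mul_le_one (ht0 : 0 ≤ t) (ht1 : t ≤ 1) (hr1 : r ≤ 1) :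
    radialFactor t r * r ≤ 1 := by
  have : min (3 * r) 1 ≤ 1 := min_le_right _ _
  calc radialFactor t r * r = (1 - t) * (3 / max 1 (3 * r) * r) + t * r := by
        unfold radialFactor; ring
    _ ≤ (1 - t) * 1 + t * 1 := by rw [three_div_max_mul]; gcongr
    _ = 1 := by ring

lemma radialFactor_zero_mul_of_ge (hr : 1 / 3 ≤ r) : radialFactor 0 r * r = 1 := by
  rw [radialFactor, max_eq_right (by linarith)]; field_simp; norm_num

lemma cellTime_eq_left (hk : 0 < k) (hk1 : k ≤ 1) (hkr : 3 * k * r ≤ 1) :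
    cellTime k r = (3 * k - 1) / (2 * k) := by
  refine min_eq_left ((div_le_div_iff₀ (by positivity) (by nlinarith)).2 ?_)
  nlinarith

lemma cellTime_eq_right (hk : 0 < k) (hk1 : k ≤ 1) (hkr : 1 ≤ 3 * k * r) (hkr' : k * r < 1) :
    cellTime k r = (1 - r) / (1 - k * r) := by
  refine min_eq_right ((div_le_div_iff₀ (by linarith) (by positivity)).2 ?_)
  nlinarith

lemma radialFactor_cellTime_mul (hk : 1 / 3 ≤ k) (hk1 : k ≤ 2 / 3) (hr1 : r ≤ 1) :
    radialFactor (cellTime k r) (k * r) * k = 1 := by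
  rcases le_total (3 * k * r) 1 with h | h
  · rw [cellTime_eq_left (by linarith) (by linarith) h, radialFactor,
      max_eq_left (by linarith)]
    field_simp; ring
  · have hr : r ≠ 0 := (by nlinarith : 0 < r).ne'
    have hkr : k * r < 1 := by nlinarith
    have : 1 - r * k ≠ 0 := by rw [mul_comm]; exact (sub_pos.2 hkr).ne'
    rw [cellTime_eq_right (by linarith) (by linarith) h hkr, radialFactor,
      max_eq_right (by linarith)]
    field_simp
    ring

lemma cellTime_nonneg (hk : 1 / 3 ≤ k) (hkr : k * r < 1) (hr1 : r ≤ 1) : 0 ≤ cellTime k r :=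
  le_min (div_nonneg (by linarith) (by linarith)) (div_nonneg (by linarith) (by linarith))

lemma cellTime_one (hk : 1 / 3 ≤ k) (hk1 : k < 1) : cellTime k 1 = 0 :=
  le_antisymm (min_le_right _ _ |>.trans_eq (by simp)) (cellTime_nonneg hk (by linarith) le_rfl)

lemma cellTime_one_third (hr1 : r ≤ 1) : cellTime (1 / 3) r = 0 :=
  le_antisymm (min_le_left _ _ |>.trans_eq (by norm_num))
    (cellTime_nonneg le_rfl (by linarith) hr1)

lemma cellScale_zero : cellScale ε 0 r = 1 / 3 := by simp [cellScale]

lemma cellScale_one : cellScale ε s 1 = (1 + s) / 3 := by simp [cellScale]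

lemma one_third_le_cellScale (hs : 0 ≤ s) : 1 / 3 ≤ cellScale ε s r := by
  unfold cellScale
  nlinarith [le_max_left 0 (1 - 3 * (1 - r) / ε)]

lemma cellScale_le_two_thirds (hε : 0 < ε) (hs1 : s ≤ 1) (hr : r ≤ 1) :
    cellScale ε s r ≤ 2 / 3 := by
  unfold cellScale
  have : max 0 (1 - 3 * (1 - r) / ε) ≤ 1 :=
    max_le zero_le_one (sub_le_self _ (div_nonneg (by linarith) hε.le))
  nlinarith [le_max_left 0 (1 - 3 * (1 - r) / ε)]

lemma cellTime_cellScale_le (hε : 0 < ε) (hs0 : 0 ≤ s) (hs1 : s ≤ 1) (hr1 : r ≤ 1) :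
    cellTime (cellScale ε s r) r ≤ ε := by
  have hk := cellScale_le_two_thirds hε hs1 hr1
  rcases le_or_gt (3 * (1 - r)) ε with h | h
  · have hkr : cellScale ε s r * r ≤ 2 / 3 := by
      nlinarith [one_third_le_cellScale (ε := ε) (r := r) hs0]
    refine (min_le_right _ _).trans ((div_le_iff₀ (by linarith)).2 ?_)
    nlinarith
  · -- far from the sphere the scale is `1 / 3`, where no time is needed
    have hmax : max 0 (1 - 3 * (1 - r) / ε) = 0 :=
      max_eq_left (by rw [sub_nonpos, le_div_iff₀ hε]; linarith)
    refine (min_le_left _ _).trans ?_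
    rw [cellScale, hmax]
    norm_num
    exact hε.le

lemma continuous_cellScale : Continuous fun a : ℝ × ℝ => cellScale ε a.1 a.2 := by
  unfold cellScale; fun_prop

lemma Continuous.cellTime {α : Type*} [TopologicalSpace α] {f g : α → ℝ} (hf : Continuous f)
    (hg : Continuous g) (hf0 : ∀ a, 0 < f a) (hfg : ∀ a, f a * g a < 1) :
    Continuous fun a => cellTime (f a) (g a) :=
  ((by fun_prop : Continuous fun a => 3 * f a - 1).div (by fun_prop) fun a => by
      linarith [hf0 a]).min
    ((by fun_prop : Continuous fun a => 1 - g a).div (by fun_prop) fun a => by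
      linarith [hfg a])

end Scalar

section RadialHomotopy

variable {n : ℕ}

def radialHomotopy (n : ℕ) : C(I × Disk n, Disk n) where
  toFun a := ⟨radialFactor a.1 ‖a.2.1‖ • a.2.1, by
      rw [mem_closedBall_zero_iff, norm_smul, Real.norm_of_nonneg
        (radialFactor_nonneg a.1.2.1 a.1.2.2)]
      exact radialFactor_mul_le_one a.1.2.1 a.1.2.2 (norm_coe_disk_le_one a.2)⟩
  continuous_toFun := by
    have hy : Continuous fun a : I × Disk n => a.2.1 :=
      continuous_subtype_val.comp continuous_snd
    exact ((continuous_radialFactor.comp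
      ((continuous_subtype_val.comp continuous_fst).prodMk hy.norm)).smul hy).subtype_mk _

lemma radialHomotopy_coe (t : I) (y : Disk n) :
    (radialHomotopy n (t, y)).1 = radialFactor t ‖y.1‖ • y.1 :=
  rfl

lemma norm_radialHomotopy_zero (y : Disk n) (hy : 1 / 3 ≤ ‖y.1‖) :
    ‖(radialHomotopy n (0, y)).1‖ = 1 := by
  rw [radialHomotopy_coe, Set.Icc.coe_zero, norm_smul,
    Real.norm_of_nonneg (radialFactor_nonneg le_rfl zero_le_one)]
  exact radialFactor_zero_mul_of_ge hy

lemma radialHomotopy_zero_of_eq_smul (x : sphere (0 : EuclideanSpace ℝ (Fin n)) 1) (y : Disk n)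
    {c : ℝ} (hc : 1 / 3 ≤ c) (hy : y.1 = c • x.1) : (radialHomotopy n (0, y)).1 = x := by
  have hx : ‖x.1‖ = 1 := mem_sphere_zero_iff_norm.1 x.2
  rw [radialHomotopy_coe, Set.Icc.coe_zero, hy, norm_smul, hx,
    Real.norm_of_nonneg (by linarith), mul_one, smul_smul]
  simp [radialFactor_zero_mul_of_ge hc]

theorem exists_section_radialHomotopy {ε : ℝ} (hε : 0 < ε) :
    ∃ τ : C(I × Disk n, I × Disk n), (∀ a, ((τ a).1 : ℝ) ≤ ε) ∧
      (∀ a, radialHomotopy n (τ a) = a.2) ∧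
      (∀ x, ∃ y : Disk n, τ (0, x) = (0, y) ∧ ‖y.1‖ ≤ 1 / 3) ∧
      ∀ (s : I) (x : Disk n), ‖x.1‖ = 1 →
        ∃ y : Disk n, τ (s, x) = (0, y) ∧ y.1 = ((1 + s) / 3 : ℝ) • x.1 := by
  set δ := min ε 1
  have hδ : 0 < δ := lt_min hε one_pos
  let k : I × Disk n → ℝ := fun a => cellScale δ a.1 ‖a.2.1‖
  have hk : ∀ a, 1 / 3 ≤ k a ∧ k a ≤ 2 / 3 := fun a =>
    ⟨one_third_le_cellScale a.1.2.1,
      cellScale_le_two_thirds hδ a.1.2.2 (norm_coe_disk_le_one a.2)⟩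
  have hkr : ∀ a, k a * ‖a.2.1‖ ≤ 2 / 3 := fun a => by
    nlinarith [hk a, norm_coe_disk_le_one a.2, norm_nonneg a.2.1]
  let T : I × Disk n → ℝ := fun a => cellTime (k a) ‖a.2.1‖
  have hT : ∀ a, 0 ≤ T a ∧ T a ≤ δ := fun a =>
    ⟨cellTime_nonneg (hk a).1 (by linarith [hkr a]) (norm_coe_disk_le_one a.2),
      cellTime_cellScale_le hδ a.1.2.1 a.1.2.2 (norm_coe_disk_le_one a.2)⟩
  have hkx : ∀ a, k a • a.2.1 ∈ closedBall 0 1 := fun a => by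
    rw [mem_closedBall_zero_iff, norm_smul, Real.norm_of_nonneg (by linarith [hk a])]
    linarith [hkr a]
  have hy : Continuous fun a : I × Disk n => a.2.1 :=
    continuous_subtype_val.comp continuous_snd
  have hkc : Continuous k :=
    continuous_cellScale.comp ((continuous_subtype_val.comp continuous_fst).prodMk hy.norm)
  have hTc : Continuous T :=
    hkc.cellTime hy.norm (fun a => by linarith [hk a]) (fun a => by linarith [hkr a])
  refine ⟨⟨fun a => (⟨T a, (hT a).1, (hT a).2.trans (min_le_right _ _)⟩,
      ⟨k a • a.2, hkx a⟩), (hTc.subtype_mk _).prodMk ((hkc.smul hy).subtype_mk _)⟩,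
    fun a => (hT a).2.trans (min_le_left _ _), fun a => ?_, fun x => ?_, fun s x hx => ?_⟩
  · apply Subtype.ext
    change radialFactor (cellTime (k a) ‖a.2.1‖) ‖k a • a.2.1‖ • k a • a.2.1 = a.2
    rw [norm_smul, Real.norm_of_nonneg (by linarith [hk a]), smul_smul,
      radialFactor_cellTime_mul (hk a).1 (hk a).2 (norm_coe_disk_le_one a.2), one_smul]
  · have hk0 : k (0, x) = 1 / 3 := cellScale_zero
    refine ⟨_, Prod.ext (Subtype.ext ?_) rfl, ?_⟩
    · change cellTime (k (0, x)) _ = 0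
      rw [hk0]
      exact cellTime_one_third (norm_coe_disk_le_one x)
    · change ‖k (0, x) • x.1‖ ≤ 1 / 3
      rw [hk0, norm_smul, Real.norm_of_nonneg (by norm_num)]
      linarith [norm_coe_disk_le_one x]
  · have hks : k (s, x) = (1 + s) / 3 := by
      change cellScale δ s ‖x.1‖ = _
      rw [hx, cellScale_one]
    refine ⟨_, Prod.ext (Subtype.ext ?_) rfl, congrArg (· • _) hks⟩
    change cellTime (k (s, x)) ‖x.1‖ = 0
    rw [hks, hx]
    exact cellTime_one (by linarith [s.2.1]) (by linarith [s.2.2])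

end RadialHomotopy

structure IsFibrewiseHomotopyFrom {E B Z : Type*} [TopologicalSpace E] [TopologicalSpace Z]
    (p : E → B) (b : Z → B) (g : Z → E) (ψ : C(I × Z, E)) : Prop where
  apply_zero : ∀ z, ψ (0, z) = g z
  proj_apply : ∀ t z, p (ψ (t, z)) = b z

section Extension

variable {E B Y : Type*} [TopologicalSpace E] [TopologicalSpace B] [TopologicalSpace Y]
  {p : E → B} {n : ℕ}

theorem exists_lift_radialHomotopy_zero (b : C(Disk n, B)) (g : C(Disk n, E))
    (hg : ∀ y, p (g y) = b y) (ψ : C(I × sphere (0 : EuclideanSpace ℝ (Fin n)) 1, E))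
    (hψ : IsFibrewiseHomotopyFrom p (b ∘ inclusion sphere_subset_closedBall)
      (g ∘ inclusion sphere_subset_closedBall) ψ) :
    ∃ g' : C(Disk n, E), (∀ y, p (g' y) = b (radialHomotopy n (0, y))) ∧
      (∀ y : Disk n, ‖y.1‖ ≤ 1 / 3 → g' y = g (radialHomotopy n (0, y))) ∧
      ∀ (s : I) (x : sphere (0 : EuclideanSpace ℝ (Fin n)) 1) (y : Disk n),
        y.1 = ((1 + s) / 3 : ℝ) • x.1 → g' y = ψ (s, x) := by
  let inner := {y : Disk n | ‖y.1‖ ≤ 1 / 3}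
  let outer := {y : Disk n | 1 / 3 ≤ ‖y.1‖}
  have hnorm : Continuous fun y : Disk n => ‖y.1‖ := by fun_prop
  have hsph : ∀ y : outer, (radialHomotopy n (0, y.1)).1 ∈ sphere 0 1 := fun y =>
    mem_sphere_zero_iff_norm.2 (norm_radialHomotopy_zero y.1 y.2)
  let collapse : C(Disk n, Disk n) := (radialHomotopy n).curry 0
  -- On the annulus `outer` the homotopy `ψ` is spread out radially, finishing at radius `2 / 3`.
  let g₂ : C(outer, E) := ψ.comp <| ContinuousMap.prodMk
    ⟨fun y => projIcc 0 1 zero_le_one (3 * ‖y.1.1‖ - 1),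
      continuous_projIcc.comp (by fun_prop)⟩
    ⟨fun y => ⟨collapse y.1, hsph y⟩, (continuous_subtype_val.comp
      (collapse.continuous.comp continuous_subtype_val)).subtype_mk _⟩
  obtain ⟨g', hg'₁, hg'₂⟩ := ContinuousMap.exists_glue_of_isClosed
    (isClosed_le hnorm continuous_const) (isClosed_le continuous_const hnorm)
    (by ext y; simp [le_total])
    ((g.comp collapse).restrict inner) g₂ fun y hy₁ hy₂ => by
      have h3 : 3 * ‖y.1‖ - 1 = 0 := by
        have h₁ : ‖y.1‖ ≤ 1 / 3 := hy₁
        have h₂ : 1 / 3 ≤ ‖y.1‖ := hy₂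
        linarith
      simp [g₂, h3, hψ.apply_zero]
  refine ⟨g', fun y => ?_, fun y hy => hg'₁ ⟨y, hy⟩, fun s x y hy => ?_⟩
  · rcases le_total ‖y.1‖ (1 / 3) with h | h
    · rw [hg'₁ ⟨y, h⟩]
      exact hg _
    · rw [hg'₂ ⟨y, h⟩]
      exact hψ.proj_apply _ _
  · have hs : 0 ≤ (s : ℝ) := s.2.1
    have hny : ‖y.1‖ = (1 + s) / 3 := by
      rw [hy, norm_smul, mem_sphere_zero_iff_norm.1 x.2, mul_one,
        Real.norm_of_nonneg (by linarith)]
    rw [hg'₂ ⟨y, show 1 / 3 ≤ ‖y.1‖ by rw [hny]; linarith⟩]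
    refine congrArg ψ (Prod.ext ?_ (Subtype.ext ?_))
    · change projIcc 0 1 zero_le_one (3 * ‖y.1‖ - 1) = s
      rw [hny, show 3 * ((1 + s) / 3) - 1 = (s : ℝ) by ring, projIcc_val]
    · exact radialHomotopy_zero_of_eq_smul x y (by linarith) hy

theorem IsSerreMicrofibration.exists_fibrewiseHomotopy_extension_disk
    (hp : IsSerreMicrofibration p) (b : C(Disk n, B)) (g : C(Disk n, E))
    (hg : ∀ y, p (g y) = b y) (ψ : C(I × sphere (0 : EuclideanSpace ℝ (Fin n)) 1, E))
    (hψ : IsFibrewiseHomotopyFrom p (b ∘ inclusion sphere_subset_closedBall)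
      (g ∘ inclusion sphere_subset_closedBall) ψ) :
    ∃ Ψ : C(I × Disk n, E), IsFibrewiseHomotopyFrom p b g Ψ ∧
      ∀ t x, Ψ (t, inclusion sphere_subset_closedBall x) = ψ (t, x) := by
  obtain ⟨g', hg'p, hg'_inner, hg'_outer⟩ := exists_lift_radialHomotopy_zero b g hg ψ hψ
  obtain ⟨ε, hε, Λ, hΛ0, hΛp⟩ :=
    hp.2 n g' (b.comp (radialHomotopy n)) fun y => (hg'p y).symm
  obtain ⟨τ, hτε, hτ, hτ0, hτ_sphere⟩ := exists_section_radialHomotopy (n := n) hε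
  refine ⟨Λ.comp τ, ⟨fun x => ?_, fun t x => ?_⟩, fun t x => ?_⟩
  · obtain ⟨y, hy, hy_inner⟩ := hτ0 x
    have hyx := hτ (0, x)
    rw [hy] at hyx
    rw [ContinuousMap.comp_apply, hy, hΛ0, hg'_inner y hy_inner, hyx]
  · exact (hΛp _ _ (hτε (t, x))).trans (congrArg b (hτ (t, x)))
  · obtain ⟨y, hy, hyx⟩ := hτ_sphere t (inclusion sphere_subset_closedBall x)
      (mem_sphere_zero_iff_norm.1 x.2)
    rw [ContinuousMap.comp_apply, hy, hΛ0]
    exact hg'_outer t x y hyx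

theorem IsSerreMicrofibration.exists_fibrewiseHomotopy_extension_of_isCellAttachment
    (hp : IsSerreMicrofibration p) {A A' : Set Y} (hcell : IsCellAttachment A A' n)
    (F : C(Y, B)) (G : C(Y, E)) (hG : ∀ y, p (G y) = F y) (ψ : C(I × A, E))
    (hψ : IsFibrewiseHomotopyFrom p (fun a : A => F a) (fun a : A => G a) ψ) :
    ∃ ψ' : C(I × A', E),
      IsFibrewiseHomotopyFrom p (fun a : A' => F a) (fun a : A' => G a) ψ' ∧
      ∀ t a, ψ' (t, inclusion hcell.1 a) = ψ (t, a) := by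
  obtain ⟨hAA', Φ, hΦc, hA', hsph, hinj, hball, hweak⟩ := hcell
  have hΦA' : ∀ x : Disk n, Φ x ∈ A' := fun x => hA' ▸ Or.inr (mem_image_of_mem Φ x.2)
  have hΦA : ∀ x : Disk n, Φ x ∈ A → x.1 ∈ sphere 0 1 := by
    refine fun x hx => mem_sphere_zero_iff_norm.2 <|
      (norm_coe_disk_le_one x).eq_of_not_lt fun h => ?_
    exact (hball.subset (mem_image_of_mem Φ (mem_ball_zero_iff.2 h))).2 hx
  let ΦD : C(Disk n, Y) :=
    ⟨fun x => Φ x, hΦc.comp_continuous continuous_subtype_val Subtype.prop⟩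
  let ΦS : C(sphere (0 : EuclideanSpace ℝ (Fin n)) 1, A) :=
    ⟨fun x => ⟨Φ x, hsph (mem_image_of_mem Φ x.2)⟩, (ΦD.continuous.comp
      (continuous_inclusion sphere_subset_closedBall)).subtype_mk _⟩
  obtain ⟨Ψ, hΨ, hΨψ⟩ := hp.exists_fibrewiseHomotopy_extension_disk (F.comp ΦD)
    (G.comp ΦD) (fun x => hG _) (ψ.comp ((ContinuousMap.id I).prodMap ΦS))
    ⟨fun x => hψ.apply_zero _, fun t x => hψ.proj_apply _ _⟩
  -- The homotopies are glued as maps into `C(I, E)`, to which the weak topology applies.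
  obtain ⟨κ, hκA, hκD⟩ := exists_continuousMap_extend_of_cellAttachment hAA' hΦA' hsph hinj
    hball hweak (ψ.comp ContinuousMap.prodSwap).curry (Ψ.comp ContinuousMap.prodSwap).curry
    fun x hx => ContinuousMap.ext fun t => hΨψ t ⟨x, hΦA x hx⟩
  have hcases : ∀ b : A',
      (∃ a : A, inclusion hAA' a = b) ∨ ∃ x : Disk n, ⟨Φ x, hΦA' x⟩ = b := by
    intro b
    by_cases hb : (b : Y) ∈ A
    · exact Or.inl ⟨⟨b, hb⟩, rfl⟩
    · obtain ⟨x, hx, hxb⟩ := hball.symm.subset ⟨b.2, hb⟩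
      exact Or.inr ⟨⟨x, ball_subset_closedBall hx⟩, Subtype.ext hxb⟩
  refine ⟨κ.uncurry.comp ContinuousMap.prodSwap, ⟨fun b => ?_, fun t b => ?_⟩,
    fun t a => ?_⟩
  · rcases hcases b with ⟨a, rfl⟩ | ⟨x, rfl⟩
    · simpa [hκA] using hψ.apply_zero a
    · simpa [hκD, ΦD] using hΨ.apply_zero x
  · rcases hcases b with ⟨a, rfl⟩ | ⟨x, rfl⟩
    · simpa [hκA] using hψ.proj_apply t a
    · simpa [hκD, ΦD] using hΨ.proj_apply t x
  · simp [hκA]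

theorem IsSerreMicrofibration.exists_fibrewiseHomotopy_extension_of_isFiniteRelCW
    (hp : IsSerreMicrofibration p) {X : Set Y} (hX : IsFiniteRelCW X)
    (F : C(Y, B)) (G : C(Y, E)) (hG : ∀ y, p (G y) = F y) (φ : C(I × X, E))
    (hφ : IsFibrewiseHomotopyFrom p (fun x : X => F x) (fun x : X => G x) φ) :
    ∃ Φ : C(I × Y, E), IsFibrewiseHomotopyFrom p F G Φ ∧
      ∀ t (x : X), Φ (t, x) = φ (t, x) := by
  obtain ⟨m, S, rfl, hSm, hcells⟩ := hX
  have hS : ∀ k ≤ m, ∃ (h0k : S 0 ⊆ S k) (ψ : C(I × S k, E)),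
      IsFibrewiseHomotopyFrom p (fun a : S k => F a) (fun a : S k => G a) ψ ∧
        ∀ t x, ψ (t, inclusion h0k x) = φ (t, x) := by
    intro k
    induction k with
    | zero => exact fun _ => ⟨subset_rfl, φ, hφ, fun t x => rfl⟩
    | succ k ih =>
      intro hk
      obtain ⟨h0k, ψ, hψ, hψφ⟩ := ih (by omega)
      obtain ⟨d, hcell⟩ := hcells k (by omega)
      obtain ⟨ψ', hψ', hψ'ψ⟩ :=
        hp.exists_fibrewiseHomotopy_extension_of_isCellAttachment hcell F G hG ψ hψ
      exact ⟨h0k.trans hcell.1, ψ', hψ', fun t x => (hψ'ψ t _).trans (hψφ t x)⟩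
  obtain ⟨h0m, ψ, hψ, hψφ⟩ := hS m le_rfl
  let e : C(Y, S m) := ⟨fun y => ⟨y, hSm ▸ mem_univ y⟩, continuous_id.subtype_mk _⟩
  exact ⟨ψ.comp ((ContinuousMap.id I).prodMap e),
    ⟨fun y => hψ.apply_zero (e y), fun t y => hψ.proj_apply t (e y)⟩, fun t x => hψφ t x⟩

end Extension

theorem serreMicrofibration_lift_of_fibrewise_homotopic_general {E B Y : Type*}
    [TopologicalSpace E] [TopologicalSpace B] [TopologicalSpace Y]
    (p : E → B) (hp : IsSerreMicrofibration p)
    (X : Set Y) (hXY : IsFiniteCWPair X)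
    (F : C(Y, B)) (f : C(↥X, E))
    (G : C(Y, E)) (hG : ∀ y : Y, p (G y) = F y)
    (φ : C(unitInterval × ↥X, E))
    (hφ0 : ∀ x : ↥X, φ (0, x) = G ↑x) (hφ1 : ∀ x : ↥X, φ (1, x) = f x)
    (hφp : ∀ (t : unitInterval) (x : ↥X), p (φ (t, x)) = F ↑x) :
    ∃ H : C(Y, E), (∀ y : Y, p (H y) = F y) ∧ ∀ x : ↥X, H ↑x = f x := by
  obtain ⟨Φ, hΦ, hΦφ⟩ :=
    hp.exists_fibrewiseHomotopy_extension_of_isFiniteRelCW hXY.2.2.2 F G hG φ ⟨hφ0, hφp⟩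
  exact ⟨Φ.curry 1, fun y => hΦ.proj_apply 1 y, fun x => (hΦφ 1 x).trans (hφ1 x)⟩

/-- Given a Serre microfibration `p : E → B`, a finite CW pair `(Y, X)`, a map
`F : Y → B`, and a partial lift `f : X → E`: if there is a full lift `G : Y → E` of `F`
whose restriction to `X` is fibrewise homotopic to `f`, then there is a full lift
`H : Y → E` of `F` with `H|_X = f`. -/
theorem serreMicrofibration_lift_of_fibrewise_homotopic {E B Y : Type*}
    [TopologicalSpace E] [TopologicalSpace B] [TopologicalSpace Y]
    (p : E → B) (hp : IsSerreMicrofibration p)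
    (X : Set Y) (hXY : IsFiniteCWPair X)
    (F : C(Y, B)) (f : C(↥X, E)) (hf : ∀ x : ↥X, p (f x) = F ↑x)
    (G : C(Y, E)) (hG : ∀ y : Y, p (G y) = F y)
    (φ : C(unitInterval × ↥X, E))
    (hφ0 : ∀ x : ↥X, φ (0, x) = G ↑x) (hφ1 : ∀ x : ↥X, φ (1, x) = f x)
    (hφp : ∀ (t : unitInterval) (x : ↥X), p (φ (t, x)) = F ↑x) :
    ∃ H : C(Y, E), (∀ y : Y, p (H y) = F y) ∧ ∀ x : ↥X, H ↑x = f x :=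
  serreMicrofibration_lift_of_fibrewise_homotopic_general p hp X hXY F f G hG φ hφ0 hφ1 hφp
end
end

section
/- Fix a form parameter (ε, Λ). If e_0, e_1: H → H^{⊕g} are morphisms of (ε, Λ)-quadratic modules whose images are orthogonal with respect to the bilinear form (λ(e_0(x), e_1(y)) = 0 for all x, y ∈ H), then there is an automorphism f of the quadratic module H^{⊕g} which interchanges them: f ∘ e_0 = e_1 and f ∘ e_1 = e_0. -/
noncomputable section

/-- A form parameter `(ε, Λ)`: a unit `ε = ±1` and a subgroup `Λ ≤ ℤ` with
`{a - εa} ⊆ Λ ⊆ {a | a + εa = 0}`. -/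
structure FormParam where
  eps : ℤ
  eps_unit : eps = 1 ∨ eps = -1
  L : AddSubgroup ℤ
  lower : ∀ a : ℤ, a - eps * a ∈ L
  upper : ∀ a ∈ L, a + eps * a = 0

/-- An `(ε, Λ)`-quadratic structure on an abelian group `M`: an `ε`-symmetric bilinear
form `B : M × M → ℤ` and a `Λ`-quadratic form `q : M → ℤ/Λ` refining it. -/
structure QModule (P : FormParam) (M : Type*) [AddCommGroup M] where
  B : M → M → ℤ
  B_add_left : ∀ x y z : M, B (x + y) z = B x z + B y z
  B_symm : ∀ x y : M, B y x = P.eps * B x y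
  q : M → ℤ ⧸ P.L
  q_smul : ∀ (a : ℤ) (x : M), q (a • x) = (a * a) • q x
  q_add : ∀ x y : M, q (x + y) = q x + q y + QuotientAddGroup.mk (B x y)

/-- A morphism of `(ε, Λ)`-quadratic modules: an additive map preserving `B` and `q`. -/
def IsQHom {P : FormParam} {M N : Type*} [AddCommGroup M] [AddCommGroup N]
    (sM : QModule P M) (sN : QModule P N) (f : M →+ N) : Prop :=
  (∀ x y : M, sN.B (f x) (f y) = sM.B x y) ∧ ∀ x : M, sN.q (f x) = sM.q x

/-- Isomorphism of quadratic modules. -/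
def QIso {P : FormParam} {M N : Type*} [AddCommGroup M] [AddCommGroup N]
    (sM : QModule P M) (sN : QModule P N) : Prop :=
  ∃ e : M ≃+ N, IsQHom sM sN e.toAddMonoidHom

lemma hyp_q_smul_key (P : FormParam) (a : ℤ) (u : ℤ × ℤ) :
    (QuotientAddGroup.mk ((a • u).1 * (a • u).2) : ℤ ⧸ P.L) =
      (a * a) • QuotientAddGroup.mk (u.1 * u.2) := by
  have h : (a • u).1 * (a • u).2 = (a * a) • (u.1 * u.2) := by
    simp only [Prod.smul_fst, Prod.smul_snd, smul_eq_mul]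
    ring
  rw [h]
  rfl

lemma hyp_q_add_key (P : FormParam) (u v : ℤ × ℤ) :
    (QuotientAddGroup.mk ((u + v).1 * (u + v).2) : ℤ ⧸ P.L) =
      QuotientAddGroup.mk (u.1 * u.2) + QuotientAddGroup.mk (v.1 * v.2) +
        QuotientAddGroup.mk (u.1 * v.2 + P.eps * (u.2 * v.1)) := by
  have h1 : (QuotientAddGroup.mk (u.1 * u.2) : ℤ ⧸ P.L) + QuotientAddGroup.mk (v.1 * v.2) +
      QuotientAddGroup.mk (u.1 * v.2 + P.eps * (u.2 * v.1)) =
      QuotientAddGroup.mk (u.1 * u.2 + v.1 * v.2 + (u.1 * v.2 + P.eps * (u.2 * v.1))) := rfl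
  rw [h1, QuotientAddGroup.eq_iff_sub_mem]
  have key : (u + v).1 * (u + v).2 -
      (u.1 * u.2 + v.1 * v.2 + (u.1 * v.2 + P.eps * (u.2 * v.1))) =
      u.2 * v.1 - P.eps * (u.2 * v.1) := by
    simp only [Prod.fst_add, Prod.snd_add]
    ring
  rw [key]
  exact P.lower _

/-- The hyperbolic module `H`: `ℤ²` with basis `e = (1,0)`, `f = (0,1)`,
`λ(e,f) = 1`, `λ(f,e) = ε`, `λ(e,e) = λ(f,f) = 0` and `α(e) = α(f) = 0`. -/
def Hyp (P : FormParam) : QModule P (ℤ × ℤ) where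
  B x y := x.1 * y.2 + P.eps * (x.2 * y.1)
  B_add_left := by intro x y z; simp [Prod.fst_add, Prod.snd_add]; ring
  B_symm := by
    intro x y
    rcases P.eps_unit with h | h <;> rw [h] <;> ring
  q x := QuotientAddGroup.mk (x.1 * x.2)
  q_smul := fun a x => hyp_q_smul_key P a x
  q_add := fun x y => hyp_q_add_key P x y

/-- The orthogonal direct sum `H^{⊕ g}` of `g` copies of the hyperbolic module. -/
def HypG (P : FormParam) (g : ℕ) : QModule P (Fin g → ℤ × ℤ) where
  B x y := ∑ i, ((x i).1 * (y i).2 + P.eps * ((x i).2 * (y i).1))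
  B_add_left := by
    intro x y z
    rw [← Finset.sum_add_distrib]
    refine Finset.sum_congr rfl fun i _ => ?_
    simp [Prod.fst_add, Prod.snd_add]
    ring
  B_symm := by
    intro x y
    rw [Finset.mul_sum]
    refine Finset.sum_congr rfl fun i _ => ?_
    rcases P.eps_unit with h | h <;> rw [h] <;> ring
  q x := ∑ i, QuotientAddGroup.mk ((x i).1 * (x i).2)
  q_smul := by
    intro a x
    show (∑ i, QuotientAddGroup.mk (((a • x) i).1 * ((a • x) i).2) : ℤ ⧸ P.L) =
      (a * a) • ∑ i, QuotientAddGroup.mk ((x i).1 * (x i).2)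
    rw [Finset.smul_sum]
    exact Finset.sum_congr rfl fun i _ => hyp_q_smul_key P a (x i)
  q_add := by
    intro x y
    show (∑ i, QuotientAddGroup.mk (((x + y) i).1 * ((x + y) i).2) : ℤ ⧸ P.L) =
      ∑ i, QuotientAddGroup.mk ((x i).1 * (x i).2) +
        ∑ i, QuotientAddGroup.mk ((y i).1 * (y i).2) +
          QuotientAddGroup.mk (∑ i, ((x i).1 * (y i).2 + P.eps * ((x i).2 * (y i).1)))
    have hmk : (QuotientAddGroup.mk
        (∑ i, ((x i).1 * (y i).2 + P.eps * ((x i).2 * (y i).1))) : ℤ ⧸ P.L) =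
        ∑ i, (QuotientAddGroup.mk ((x i).1 * (y i).2 + P.eps * ((x i).2 * (y i).1)) : ℤ ⧸ P.L) :=
      map_sum (QuotientAddGroup.mk' P.L) _ _
    rw [hmk, ← Finset.sum_add_distrib, ← Finset.sum_add_distrib]
    exact Finset.sum_congr rfl fun i _ => hyp_q_add_key P (x i) (y i)

lemma FormParam.eps_sq (P : FormParam) : P.eps * P.eps = 1 := by
  rcases P.eps_unit with h | h <;> rw [h] <;> ring

lemma HypG_B_def (P : FormParam) (g : ℕ) (x y : Fin g → ℤ × ℤ) :
    (HypG P g).B x y = ∑ i, ((x i).1 * (y i).2 + P.eps * ((x i).2 * (y i).1)) := rfl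

lemma Hyp_B_def (P : FormParam) (x y : ℤ × ℤ) :
    (Hyp P).B x y = x.1 * y.2 + P.eps * (x.2 * y.1) := rfl

lemma BG_add_right (P : FormParam) (g : ℕ) (x y z : Fin g → ℤ × ℤ) :
    (HypG P g).B x (y + z) = (HypG P g).B x y + (HypG P g).B x z := by
  simp only [HypG_B_def]
  rw [← Finset.sum_add_distrib]
  refine Finset.sum_congr rfl fun i _ => ?_
  simp only [Pi.add_apply, Prod.fst_add, Prod.snd_add]
  ring

lemma BG_smul_left (P : FormParam) (g : ℕ) (a : ℤ) (x y : Fin g → ℤ × ℤ) :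
    (HypG P g).B (a • x) y = a * (HypG P g).B x y := by
  simp only [HypG_B_def]
  rw [Finset.mul_sum]
  refine Finset.sum_congr rfl fun i _ => ?_
  simp only [Pi.smul_apply, Prod.smul_fst, Prod.smul_snd, smul_eq_mul]
  ring

/-- The "projection" onto a hyperbolic plane determined by a morphism `e : H → H^{⊕g}`. -/
def pr (P : FormParam) (g : ℕ) (e : (ℤ × ℤ) →+ (Fin g → ℤ × ℤ)) (v : Fin g → ℤ × ℤ) :
    ℤ × ℤ :=
  (P.eps * (HypG P g).B (e (0, 1)) v, (HypG P g).B (e (1, 0)) v)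

lemma B_pr (P : FormParam) (g : ℕ) (e : (ℤ × ℤ) →+ (Fin g → ℤ × ℤ)) (x : ℤ × ℤ)
    (v : Fin g → ℤ × ℤ) :
    (HypG P g).B (e x) v = (Hyp P).B x (pr P g e v) := by
  have hx : x = x.1 • ((1 : ℤ), (0 : ℤ)) + x.2 • ((0 : ℤ), (1 : ℤ)) := by
    ext <;> simp
  rw [show e x = e (x.1 • ((1 : ℤ), (0 : ℤ)) + x.2 • ((0 : ℤ), (1 : ℤ))) from by rw [← hx],
    map_add, map_zsmul, map_zsmul, (HypG P g).B_add_left, BG_smul_left, BG_smul_left,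
    Hyp_B_def]
  rcases P.eps_unit with h | h <;> simp only [pr, h] <;> ring

lemma B_pr' (P : FormParam) (g : ℕ) (e : (ℤ × ℤ) →+ (Fin g → ℤ × ℤ)) (v : Fin g → ℤ × ℤ)
    (x : ℤ × ℤ) :
    (HypG P g).B v (e x) = (Hyp P).B (pr P g e v) x := by
  rw [(HypG P g).B_symm (e x) v, B_pr, (Hyp P).B_symm (pr P g e v) x, ← mul_assoc,
    P.eps_sq, one_mul]

lemma pr_add (P : FormParam) (g : ℕ) (e : (ℤ × ℤ) →+ (Fin g → ℤ × ℤ))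
    (u v : Fin g → ℤ × ℤ) :
    pr P g e (u + v) = pr P g e u + pr P g e v := by
  simp only [pr, BG_add_right]
  refine Prod.ext ?_ ?_ <;> simp <;> ring

/-- Two morphisms `H → H^{⊕g}` of quadratic modules with orthogonal images are
interchanged by some automorphism of `H^{⊕g}`. -/
theorem exists_automorphism_swap_of_orthogonal (P : FormParam) (g : ℕ)
    (e₀ e₁ : (ℤ × ℤ) →+ (Fin g → ℤ × ℤ))
    (h₀ : IsQHom (Hyp P) (HypG P g) e₀) (h₁ : IsQHom (Hyp P) (HypG P g) e₁)
    (horth : ∀ x y : ℤ × ℤ, (HypG P g).B (e₀ x) (e₁ y) = 0) :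
    ∃ f : (Fin g → ℤ × ℤ) ≃+ (Fin g → ℤ × ℤ),
      IsQHom (HypG P g) (HypG P g) f.toAddMonoidHom ∧
        (∀ x, f (e₀ x) = e₁ x) ∧ ∀ x, f (e₁ x) = e₀ x := by
  have horth' : ∀ x y : ℤ × ℤ, (HypG P g).B (e₁ x) (e₀ y) = 0 := fun x y => by
    rw [(HypG P g).B_symm (e₀ y) (e₁ x), horth, mul_zero]
  have pr00 : ∀ x, pr P g e₀ (e₀ x) = x := by
    intro x
    simp only [pr, h₀.1, Hyp_B_def]
    refine Prod.ext ?_ ?_ <;> rcases P.eps_unit with h | h <;> simp [h]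
  have pr11 : ∀ x, pr P g e₁ (e₁ x) = x := by
    intro x
    simp only [pr, h₁.1, Hyp_B_def]
    refine Prod.ext ?_ ?_ <;> rcases P.eps_unit with h | h <;> simp [h]
  have pr01 : ∀ x, pr P g e₀ (e₁ x) = 0 := by
    intro x; simp only [pr, horth, mul_zero]; rfl
  have pr10 : ∀ x, pr P g e₁ (e₀ x) = 0 := by
    intro x; simp only [pr, horth', mul_zero]; rfl
  let F : (Fin g → ℤ × ℤ) → (Fin g → ℤ × ℤ) := fun v =>
    v + e₀ (pr P g e₁ v - pr P g e₀ v) + e₁ (pr P g e₀ v - pr P g e₁ v)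
  have hFd : ∀ v, F v =
      v + e₀ (pr P g e₁ v - pr P g e₀ v) + e₁ (pr P g e₀ v - pr P g e₁ v) := fun _ => rfl
  have prF0 : ∀ v, pr P g e₀ (F v) = pr P g e₁ v := by
    intro v
    rw [hFd]
    simp only [pr_add, pr00, pr01]
    abel
  have prF1 : ∀ v, pr P g e₁ (F v) = pr P g e₀ v := by
    intro v
    rw [hFd]
    simp only [pr_add, pr10, pr11]
    abel
  have hinv : ∀ v, F (F v) = v := by
    intro v
    rw [hFd (F v), prF0, prF1, hFd v]
    simp only [map_sub]
    abel
  have hadd : ∀ u v, F (u + v) = F u + F v := by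
    intro u v
    simp only [hFd, pr_add, map_sub, map_add]
    abel
  have hB : ∀ u v, (HypG P g).B (F u) (F v) = (HypG P g).B u v := by
    intro u v
    rw [hFd u, hFd v]
    simp only [(HypG P g).B_add_left, BG_add_right]
    rw [h₀.1, h₁.1, horth, horth', B_pr' P g e₀ u, B_pr' P g e₁ u, B_pr P g e₀, B_pr P g e₁]
    simp only [Hyp_B_def, Prod.fst_sub, Prod.snd_sub]
    ring
  have hq : ∀ v, (HypG P g).q (F v) = (HypG P g).q v := by
    intro v
    set s : ℤ × ℤ := pr P g e₁ v - pr P g e₀ v with hs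
    have hFv : F v = v + (e₀ s + e₁ (-s)) := by
      rw [hFd]
      rw [show pr P g e₀ v - pr P g e₁ v = -s from by rw [hs]; abel]
      abel
    rw [hFv, (HypG P g).q_add, (HypG P g).q_add, h₀.2, h₁.2, horth]
    have hqneg : (Hyp P).q (-s) = (Hyp P).q s := by
      have := (Hyp P).q_smul (-1) s
      simpa using this
    rw [hqneg]
    have hBv : (HypG P g).B v (e₀ s + e₁ (-s)) =
        (Hyp P).B (pr P g e₀ v) s + (Hyp P).B (pr P g e₁ v) (-s) := by
      rw [BG_add_right, B_pr', B_pr']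
    rw [hBv]
    have hqs : (Hyp P).q s = QuotientAddGroup.mk (s.1 * s.2) := rfl
    rw [hqs]
    have hcomb : ((HypG P g).q v + (QuotientAddGroup.mk (s.1 * s.2) +
        QuotientAddGroup.mk (s.1 * s.2) + QuotientAddGroup.mk (0 : ℤ)) +
        QuotientAddGroup.mk ((Hyp P).B (pr P g e₀ v) s + (Hyp P).B (pr P g e₁ v) (-s))
        : ℤ ⧸ P.L) =
        (HypG P g).q v + QuotientAddGroup.mk (s.1 * s.2 + s.1 * s.2 + 0 +
          ((Hyp P).B (pr P g e₀ v) s + (Hyp P).B (pr P g e₁ v) (-s))) := by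
      rw [add_assoc]
      rfl
    rw [hcomb]
    have hval : s.1 * s.2 + s.1 * s.2 + 0 +
        ((Hyp P).B (pr P g e₀ v) s + (Hyp P).B (pr P g e₁ v) (-s)) =
        s.1 * s.2 - P.eps * (s.1 * s.2) := by
      simp only [Hyp_B_def, hs, Prod.fst_sub, Prod.snd_sub, Prod.fst_neg, Prod.snd_neg]
      ring
    rw [hval]
    have hzero : (QuotientAddGroup.mk (s.1 * s.2 - P.eps * (s.1 * s.2)) : ℤ ⧸ P.L) = 0 :=
      (QuotientAddGroup.eq_zero_iff _).mpr (P.lower _)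
    rw [hzero, add_zero]
  refine ⟨AddEquiv.mk' (Equiv.mk F F hinv hinv) hadd, ⟨hB, hq⟩, ?_, ?_⟩
  · intro x
    show F (e₀ x) = e₁ x
    rw [hFd, pr00, pr10, show (0 : ℤ × ℤ) - x = -x from by abel, map_neg,
      show x - (0 : ℤ × ℤ) = x from by abel]
    abel
  · intro x
    show F (e₁ x) = e₀ x
    rw [hFd, pr01, pr11, show (0 : ℤ × ℤ) - x = -x from by abel, map_neg,
      show x - (0 : ℤ × ℤ) = x from by abel]
    abel
end
end
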